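/- arXiv:2604.20339 — 2 statements merged into one kernel-verified Lean document; each statement's English description precedes it below -/
import Mathlib

section
/- (Continuous embedding of D(A) into C([−1,1])) There exists a constant C>0 such that every u∈D(A) is bounded on (−1,1), admits finite limits as x→(−1)⁺ and as x→1⁻ (hence extends to a continuous function on [−1,1]), and satisfies sup_{x∈(−1,1)} |u(x)| ≤ C·(∫_{−1}^{1} u(x)² dx + ∫_{−1}^{1} (Au)(x)² dx)^{1/2}. -/
/-! The flux `(1 - x²) u' x = ∫_{-1}^x Au = -∫_x^1 Au` is bounded, by Cauchy–Schwarz, both by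
`√(1 + x) ‖Au‖` and by `√(1 - x) ‖Au‖`. Hence `|u'| ≤ ‖Au‖ ((1 - x)^{-1/2} + (1 + x)^{-1/2})`,
a weight whose primitive `P x = 2 (√(1 + x) - √(1 - x))` is continuous on `[-1, 1]`, and so
`|u y - u x| ≤ ‖Au‖ |P y - P x|`. Thus `u` inherits the Cauchy property of `P` at `±1`, and its
oscillation on `(-1, 1)` is at most `6 ‖Au‖`; integrating `|u x| ≤ |u y| + 6 ‖Au‖` squared over
`y` bounds `|u x|` by the `L²` norms of `u` and `Au`. -/

open MeasureTheory Set Filter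

noncomputable section

/-- `u` belongs to the domain `D(A)` of the degenerate operator `A u = ((1-x²)u')'` on
`I = (-1,1)`: `u ∈ L²(I)` is locally absolutely continuous on `I` with a.e. derivative `u'`,
and `x ↦ (1-x²)u'(x)` extends to an absolutely continuous function on `[-1,1]` vanishing at
`x = ±1`, whose a.e. derivative `Au` belongs to `L²(I)`. -/
structure MemDA (u u' Au : ℝ → ℝ) : Prop where
  sq_int : IntegrableOn (fun x => u x ^ 2) (Ioo (-1:ℝ) 1)
  locAC : ∀ a b : ℝ, a ∈ Ioo (-1:ℝ) 1 → b ∈ Ioo (-1:ℝ) 1 →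
      u b - u a = ∫ t in a..b, u' t
  deriv_intble : ∀ a b : ℝ, a ∈ Ioo (-1:ℝ) 1 → b ∈ Ioo (-1:ℝ) 1 →
      IntervalIntegrable u' volume a b
  Au_intble : IntervalIntegrable Au volume (-1) 1
  Au_sq_int : IntegrableOn (fun x => Au x ^ 2) (Ioo (-1:ℝ) 1)
  flux : ∀ x ∈ Ioo (-1:ℝ) 1, (1 - x ^ 2) * u' x = ∫ t in (-1:ℝ)..x, Au t
  flux_one : (∫ t in (-1:ℝ)..(1:ℝ), Au t) = 0

open Topology

theorem abs_integral_le_sqrt_measureReal_mul_sqrt {α : Type*} [MeasurableSpace α]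
    {μ : Measure α} [IsFiniteMeasure μ] {f : α → ℝ} (hf : MemLp f 2 μ) :
    |∫ x, f x ∂μ| ≤ √(μ.real univ) * √(∫ x, f x ^ 2 ∂μ) := by
  have holder := integral_mul_le_Lp_mul_Lq_of_nonneg Real.HolderConjugate.two_two
    (f := fun x => |f x|) (g := fun _ => (1 : ℝ)) (ae_of_all _ fun x => abs_nonneg (f x))
    (ae_of_all _ fun _ => zero_le_one) (by rw [ENNReal.ofReal_ofNat]; exact hf.abs)
    (by simpa using memLp_const 1)
  simp only [mul_one, one_pow, integral_const, smul_eq_mul, sq_abs,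
    ← Real.sqrt_eq_rpow, Real.rpow_two] at holder
  calc |∫ x, f x ∂μ| ≤ ∫ x, |f x| ∂μ := abs_integral_le_integral_abs
    _ ≤ _ := holder.trans_eq (mul_comm _ _)

theorem exists_tendsto_of_dist_le {β E F : Type*} [PseudoMetricSpace E] [CompleteSpace E]
    [PseudoMetricSpace F] {l : Filter β} [l.NeBot] {f : β → E} {g : β → F} {s : Set β}
    (hs : s ∈ l) (hfg : ∀ x ∈ s, ∀ y ∈ s, dist (f x) (f y) ≤ dist (g x) (g y)) {c : F}
    (hg : Tendsto g l (𝓝 c)) : ∃ L, Tendsto f l (𝓝 L) := by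
  rw [← cauchy_map_iff_exists_tendsto, Metric.cauchy_iff]
  refine ⟨inferInstance, fun ε hε => ?_⟩
  obtain ⟨t, ht, hgt⟩ := (Metric.cauchy_iff.1 hg.cauchy_map).2 ε hε
  refine ⟨f '' (s ∩ g ⁻¹' t), image_mem_map (inter_mem hs ht), ?_⟩
  rintro _ ⟨x, hx, rfl⟩ _ ⟨y, hy, rfl⟩
  exact (hfg x hx.1 y hy.1).trans_lt (hgt _ hx.2 _ hy.2)

theorem ContinuousOn.of_dist_le {D E F : Type*} [PseudoMetricSpace D] [PseudoMetricSpace E]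
    [PseudoMetricSpace F] {f : D → E} {g : D → F} {s : Set D} (hg : ContinuousOn g s)
    (hfg : ∀ x ∈ s, ∀ y ∈ s, dist (f x) (f y) ≤ dist (g x) (g y)) : ContinuousOn f s := by
  rw [Metric.continuousOn_iff] at hg ⊢
  intro x hx ε hε
  obtain ⟨δ, hδ, hgδ⟩ := hg x hx ε hε
  exact ⟨δ, hδ, fun y hy hyx => (hfg y hy x hx).trans_lt (hgδ y hy hyx)⟩

theorem abs_intervalIntegral_le_sqrt_mul_sqrt {f : ℝ → ℝ} {a b : ℝ} (hab : a ≤ b)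
    (hf : AEStronglyMeasurable f (volume.restrict (Ioo a b)))
    (hf2 : IntegrableOn (fun x => f x ^ 2) (Ioo a b)) :
    |∫ x in a..b, f x| ≤ √(b - a) * √(∫ x in Ioo a b, f x ^ 2) := by
  have hvol : volume.real (Ioo a b) = b - a := by simp [hab]
  rw [intervalIntegral.integral_of_le hab, integral_Ioc_eq_integral_Ioo, ← hvol,
    ← measureReal_restrict_apply_univ]
  exact abs_integral_le_sqrt_measureReal_mul_sqrt ((memLp_two_iff_integrable_sq hf).2 hf2)

theorem measureReal_mul_sq_le_of_forall_abs_le_add {α : Type*} [MeasurableSpace α]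
    {μ : Measure α} {s : Set α} (hs : MeasurableSet s) (hμs : μ s ≠ ⊤) {f : α → ℝ}
    (hf : IntegrableOn (fun y => f y ^ 2) s μ) {c K : ℝ} (hc : ∀ y ∈ s, |c| ≤ |f y| + K) :
    μ.real s * c ^ 2 ≤ 2 * ∫ y in s, f y ^ 2 ∂μ + 2 * μ.real s * K ^ 2 := by
  have : IsFiniteMeasure (μ.restrict s) := isFiniteMeasure_restrict.2 hμs
  have hpt : ∀ y ∈ s, c ^ 2 ≤ 2 * f y ^ 2 + 2 * K ^ 2 := fun y hy => by
    nlinarith [hc y hy, sq_abs c, sq_abs (f y), abs_nonneg c, sq_nonneg (|f y| - K)]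
  have hg : IntegrableOn (fun y => 2 * f y ^ 2 + 2 * K ^ 2) s μ :=
    (hf.const_mul 2).add (integrable_const _)
  have hint := setIntegral_mono_on (integrable_const _) hg hs hpt
  rw [setIntegral_const, integral_add (hf.const_mul 2) (integrable_const _), integral_const_mul,
    setIntegral_const, smul_eq_mul, smul_eq_mul] at hint
  linarith

def edgeWeight (x : ℝ) : ℝ := (√(1 - x))⁻¹ + (√(1 + x))⁻¹

def edgeWeightPrimitive (x : ℝ) : ℝ := 2 * (√(1 + x) - √(1 - x))

theorem continuous_edgeWeightPrimitive : Continuous edgeWeightPrimitive := by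
  unfold edgeWeightPrimitive; fun_prop

theorem continuousOn_edgeWeight : ContinuousOn edgeWeight (Ioo (-1) 1) := by
  intro x hx
  have h₁ : √(1 - x) ≠ 0 := (Real.sqrt_pos.2 (by linarith [hx.2])).ne'
  have h₂ : √(1 + x) ≠ 0 := (Real.sqrt_pos.2 (by linarith [hx.1])).ne'
  unfold edgeWeight
  fun_prop (disch := assumption)

theorem hasDerivAt_edgeWeightPrimitive {x : ℝ} (hx : x ∈ Ioo (-1 : ℝ) 1) :
    HasDerivAt edgeWeightPrimitive (edgeWeight x) x := by
  have h₁ : 0 < 1 + x := by linarith [hx.1]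
  have h₂ : 0 < 1 - x := by linarith [hx.2]
  have hs₁ : HasDerivAt (fun y => √(1 + y)) (1 / (2 * √(1 + x))) x :=
    ((hasDerivAt_id' x).const_add 1).sqrt h₁.ne'
  have hs₂ : HasDerivAt (fun y => √(1 - y)) (-1 / (2 * √(1 - x))) x :=
    ((hasDerivAt_id' x).const_sub 1).sqrt h₂.ne'
  refine ((hs₁.sub hs₂).const_mul 2).congr_deriv ?_
  have := Real.sqrt_pos.2 h₁
  have := Real.sqrt_pos.2 h₂
  rw [edgeWeight]
  field_simp
  ring

theorem abs_edgeWeightPrimitive_le {x : ℝ} (hx : x ∈ Icc (-1 : ℝ) 1) :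
    |edgeWeightPrimitive x| ≤ 3 := by
  have hsqrt : ∀ y ≤ 2, √y ≤ 3 / 2 := fun y hy =>
    Real.sqrt_le_iff.2 ⟨by norm_num, by linarith⟩
  have h₁ := hsqrt (1 + x) (by linarith [hx.2])
  have h₂ := hsqrt (1 - x) (by linarith [hx.1])
  have := Real.sqrt_nonneg (1 + x)
  have := Real.sqrt_nonneg (1 - x)
  rw [edgeWeightPrimitive, abs_le]
  constructor <;> linarith

theorem abs_le_div_sqrt_of_abs_mul_le {p q d N : ℝ} (hp : 0 < p) (hq : 1 ≤ q)
    (h : |p * q * d| ≤ √p * N) : |d| ≤ (√p)⁻¹ * N := by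
  have hsp := Real.sqrt_pos.2 hp
  have key : √p * (√p * q * |d|) ≤ √p * N := calc
    _ = p * q * |d| := by rw [← mul_assoc, ← mul_assoc, Real.mul_self_sqrt hp.le]
    _ = |p * q * d| := by rw [abs_mul, abs_mul, abs_of_pos hp, abs_of_pos (by linarith : 0 < q)]
    _ ≤ _ := h
  rw [inv_mul_eq_div, le_div_iff₀ hsp]
  nlinarith [le_of_mul_le_mul_left key hsp,
    mul_le_mul_of_nonneg_left hq (mul_nonneg hsp.le (abs_nonneg d))]

theorem abs_le_mul_edgeWeight {x d N : ℝ} (hx : x ∈ Ioo (-1 : ℝ) 1)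
    (h₁ : |(1 - x ^ 2) * d| ≤ √(1 + x) * N) (h₂ : |(1 - x ^ 2) * d| ≤ √(1 - x) * N) :
    |d| ≤ N * edgeWeight x := by
  have hp₁ : 0 < 1 + x := by linarith [hx.1]
  have hp₂ : 0 < 1 - x := by linarith [hx.2]
  have hN : 0 ≤ N := nonneg_of_mul_nonneg_right ((abs_nonneg _).trans h₁) (Real.sqrt_pos.2 hp₁)
  have hw₁ := mul_nonneg (inv_nonneg.2 (Real.sqrt_nonneg (1 + x))) hN
  have hw₂ := mul_nonneg (inv_nonneg.2 (Real.sqrt_nonneg (1 - x))) hN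
  rw [edgeWeight, mul_add, mul_comm N, mul_comm N]
  rcases le_total 0 x with hx₀ | hx₀
  · have := abs_le_div_sqrt_of_abs_mul_le (q := 1 + x) hp₂ (by linarith)
      (by rwa [show (1 - x) * (1 + x) = 1 - x ^ 2 by ring])
    linarith
  · have := abs_le_div_sqrt_of_abs_mul_le (q := 1 - x) hp₁ (by linarith)
      (by rwa [show (1 + x) * (1 - x) = 1 - x ^ 2 by ring])
    linarith

theorem abs_sub_le_sub_of_abs_le_deriv {f f' G g : ℝ → ℝ} {a b : ℝ} (hab : a ≤ b)
    (hf : f b - f a = ∫ t in a..b, f' t) (hG : ∀ t ∈ Icc a b, HasDerivAt G (g t) t)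
    (hg : IntervalIntegrable g volume a b) (hf'g : ∀ t ∈ Icc a b, |f' t| ≤ g t) :
    |f b - f a| ≤ G b - G a := by
  rw [hf, ← intervalIntegral.integral_eq_sub_of_hasDerivAt (by rwa [uIcc_of_le hab]) hg]
  exact intervalIntegral.norm_integral_le_of_norm_le hab
    (ae_of_all _ fun t ht => (Real.norm_eq_abs _).trans_le (hf'g t (Ioc_subset_Icc_self ht))) hg

namespace MemDA

variable {u u' Au : ℝ → ℝ}

theorem abs_intervalIntegral_le (h : MemDA u u' Au) {a b : ℝ} (ha : -1 ≤ a) (hab : a ≤ b)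
    (hb : b ≤ 1) :
    |∫ t in a..b, Au t| ≤ √(b - a) * √(∫ y in Ioo (-1 : ℝ) 1, Au y ^ 2) := by
  have hsub : Ioo a b ⊆ Ioo (-1) 1 := Ioo_subset_Ioo ha hb
  refine (abs_intervalIntegral_le_sqrt_mul_sqrt hab
    (h.Au_intble.1.mono_set (hsub.trans Ioo_subset_Ioc_self)).aestronglyMeasurable
    (h.Au_sq_int.mono_set hsub)).trans ?_
  exact mul_le_mul_of_nonneg_left (Real.sqrt_le_sqrt (setIntegral_mono_set h.Au_sq_int
    (ae_of_all _ fun _ => sq_nonneg _) hsub.eventuallyLE)) (Real.sqrt_nonneg _)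

theorem abs_deriv_le (h : MemDA u u' Au) {x : ℝ} (hx : x ∈ Ioo (-1 : ℝ) 1) :
    |u' x| ≤ √(∫ y in Ioo (-1 : ℝ) 1, Au y ^ 2) * edgeWeight x := by
  refine abs_le_mul_edgeWeight hx ?_ ?_ <;> rw [h.flux x hx]
  · simpa [sub_neg_eq_add, add_comm] using h.abs_intervalIntegral_le le_rfl hx.1.le hx.2.le
  · have hx' : x ∈ uIcc (-1 : ℝ) 1 := by
      rw [uIcc_of_le (by norm_num)]
      exact Ioo_subset_Icc_self hx
    have hsplit := intervalIntegral.integral_add_adjacent_intervals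
      (h.Au_intble.mono_set (uIcc_subset_uIcc_left hx'))
      (h.Au_intble.mono_set (uIcc_subset_uIcc_right hx'))
    rw [h.flux_one, add_eq_zero_iff_eq_neg] at hsplit
    rw [hsplit, abs_neg]
    exact h.abs_intervalIntegral_le hx.1.le hx.2.le le_rfl

theorem abs_sub_le (h : MemDA u u' Au) {a b : ℝ} (ha : a ∈ Ioo (-1 : ℝ) 1)
    (hb : b ∈ Ioo (-1 : ℝ) 1) (hab : a ≤ b) :
    |u b - u a| ≤ √(∫ y in Ioo (-1 : ℝ) 1, Au y ^ 2) * edgeWeightPrimitive b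
      - √(∫ y in Ioo (-1 : ℝ) 1, Au y ^ 2) * edgeWeightPrimitive a := by
  have hsub : Icc a b ⊆ Ioo (-1) 1 := Icc_subset_Ioo ha.1 hb.2
  refine abs_sub_le_sub_of_abs_le_deriv hab (h.locAC a b ha hb)
    (fun t ht => (hasDerivAt_edgeWeightPrimitive (hsub ht)).const_mul _) ?_
    (fun t ht => h.abs_deriv_le (hsub ht))
  exact (continuousOn_const.mul
    (continuousOn_edgeWeight.mono (by rwa [uIcc_of_le hab]))).intervalIntegrable

theorem dist_le (h : MemDA u u' Au) {x y : ℝ} (hx : x ∈ Ioo (-1 : ℝ) 1)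
    (hy : y ∈ Ioo (-1 : ℝ) 1) :
    dist (u x) (u y) ≤ dist (√(∫ y in Ioo (-1 : ℝ) 1, Au y ^ 2) * edgeWeightPrimitive x)
      (√(∫ y in Ioo (-1 : ℝ) 1, Au y ^ 2) * edgeWeightPrimitive y) := by
  wlog hxy : x ≤ y generalizing x y
  · rw [dist_comm, dist_comm (_ * _)]
    exact this hy hx (le_of_not_ge hxy)
  rw [Real.dist_eq, Real.dist_eq, abs_sub_comm, abs_sub_comm (_ * _)]
  exact (h.abs_sub_le hx hy hxy).trans (le_abs_self _)

theorem abs_le_abs_add_six_mul_sqrt (h : MemDA u u' Au) {x y : ℝ} (hx : x ∈ Ioo (-1 : ℝ) 1)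
    (hy : y ∈ Ioo (-1 : ℝ) 1) :
    |u x| ≤ |u y| + 6 * √(∫ y in Ioo (-1 : ℝ) 1, Au y ^ 2) := by
  have hosc := h.dist_le hx hy
  rw [Real.dist_eq, Real.dist_eq, ← mul_sub, abs_mul, abs_of_nonneg (Real.sqrt_nonneg _)] at hosc
  have hP : |edgeWeightPrimitive x - edgeWeightPrimitive y| ≤ 6 := by
    linarith [abs_sub (edgeWeightPrimitive x) (edgeWeightPrimitive y),
      abs_edgeWeightPrimitive_le (Ioo_subset_Icc_self hx),
      abs_edgeWeightPrimitive_le (Ioo_subset_Icc_self hy)]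
  linarith [abs_sub_abs_le_abs_sub (u x) (u y),
    mul_le_mul_of_nonneg_left hP (Real.sqrt_nonneg (∫ y in Ioo (-1 : ℝ) 1, Au y ^ 2))]

theorem abs_le_nine_mul_sqrt (h : MemDA u u' Au) {x : ℝ} (hx : x ∈ Ioo (-1 : ℝ) 1) :
    |u x| ≤ 9 * √((∫ y in Ioo (-1 : ℝ) 1, u y ^ 2) + ∫ y in Ioo (-1 : ℝ) 1, Au y ^ 2) := by
  have hU : 0 ≤ ∫ y in Ioo (-1 : ℝ) 1, u y ^ 2 :=
    setIntegral_nonneg measurableSet_Ioo fun _ _ => sq_nonneg _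
  have hE : 0 ≤ ∫ y in Ioo (-1 : ℝ) 1, Au y ^ 2 :=
    setIntegral_nonneg measurableSet_Ioo fun _ _ => sq_nonneg _
  have hvol : volume.real (Ioo (-1 : ℝ) 1) = 2 := by norm_num
  have key := measureReal_mul_sq_le_of_forall_abs_le_add measurableSet_Ioo (by simp) h.sq_int
    fun y hy => h.abs_le_abs_add_six_mul_sqrt hx hy
  rw [hvol, mul_pow, Real.sq_sqrt hE] at key
  rw [show (9 : ℝ) = √81 by rw [show (81 : ℝ) = 9 ^ 2 by norm_num, Real.sqrt_sq (by norm_num)],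
    ← Real.sqrt_mul (by norm_num)]
  exact Real.abs_le_sqrt (by linarith)

end MemDA

/-- Continuous embedding of `D(A)` into `C([-1,1])`: every `u ∈ D(A)` is bounded on `(-1,1)`,
admits finite limits at `x = ±1` (hence extends continuously to `[-1,1]`), and
`sup |u| ≤ C ‖u‖_{D(A)}`. -/
theorem DA_embeds_continuous :
    ∃ C : ℝ, 0 < C ∧ ∀ u u' Au : ℝ → ℝ, MemDA u u' Au →
      (∃ L : ℝ, Tendsto u (nhdsWithin 1 (Iio (1:ℝ))) (nhds L)) ∧
      (∃ L : ℝ, Tendsto u (nhdsWithin (-1) (Ioi (-1:ℝ))) (nhds L)) ∧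
      (∃ v : ℝ → ℝ, ContinuousOn v (Icc (-1:ℝ) 1) ∧ ∀ x ∈ Ioo (-1:ℝ) 1, v x = u x) ∧
      ∀ x ∈ Ioo (-1:ℝ) 1,
        |u x| ≤ C * Real.sqrt ((∫ y in Ioo (-1:ℝ) 1, u y ^ 2)
            + ∫ y in Ioo (-1:ℝ) 1, Au y ^ 2) := by
  refine ⟨9, by norm_num, fun u u' Au h => ?_⟩
  set H := fun x => √(∫ y in Ioo (-1 : ℝ) 1, Au y ^ 2) * edgeWeightPrimitive x
  have hH : Continuous H := continuous_const.mul continuous_edgeWeightPrimitive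
  have hdom : ∀ x ∈ Ioo (-1 : ℝ) 1, ∀ y ∈ Ioo (-1 : ℝ) 1, dist (u x) (u y) ≤ dist (H x) (H y) :=
    fun x hx y hy => h.dist_le hx hy
  have hcont : ContinuousOn u (Ioo (-1) 1) := hH.continuousOn.of_dist_le hdom
  obtain ⟨L₁, hL₁⟩ := exists_tendsto_of_dist_le (Ioo_mem_nhdsLT (by norm_num)) hdom
    (hH.continuousWithinAt (x := 1)).tendsto
  obtain ⟨L₂, hL₂⟩ := exists_tendsto_of_dist_le (Ioo_mem_nhdsGT (by norm_num)) hdom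
    (hH.continuousWithinAt (x := -1)).tendsto
  exact ⟨⟨L₁, hL₁⟩, ⟨L₂, hL₂⟩, ⟨extendFrom (Ioo (-1) 1) u,
    continuousOn_Icc_extendFrom_Ioo hcont hL₂ hL₁, extendFrom_extends hcont⟩,
    fun x hx => h.abs_le_nine_mul_sqrt hx⟩
end
end

section
/- (Compact embedding of V into L²) Let (u_n)_{n∈ℕ} be a sequence of functions in V such that sup_n (∫_{−1}^{1} u_n(x)² dx + ∫_{−1}^{1} (1−x²)·u_n′(x)² dx) < ∞. Then there exist a subsequence (u_{n_k}) and a function u∈L²(−1,1) such that ∫_{−1}^{1} (u_{n_k}(x)−u(x))² dx → 0 as k→∞. -/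
/-!
Because `∫_a^b (1 - t²)⁻¹ dt = artanh b - artanh a`, Cauchy–Schwarz against the weight `1 - t²`
gives `(u b - u a)² ≤ W · |artanh b - artanh a|`, where `W` is the weighted energy of `u`.
Hence a `V`-bounded sequence is equicontinuous on `(-1, 1)`, and comparing `u x` with a point
of `(-1/2, 1/2)` where `u²` lies below its mean gives the uniform bound
`u x ² ≤ 2B (2 + |artanh x|)`, which is integrable since `artanh` has only logarithmic
singularities at `±1`. Equicontinuity and a diagonal argument over a countable dense set give a
pointwise convergent subsequence, and dominated convergence upgrades this to convergence in `L²`.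
-/

open MeasureTheory Set Filter

noncomputable section

/-- `u` belongs to the weighted space `V` on `I = (-1,1)`: it is square integrable on `I`,
locally absolutely continuous on `I` with a.e. derivative `u'`, and `√(1-x²)·u'` is square
integrable on `I`. -/
structure MemV (u u' : ℝ → ℝ) : Prop where
  sq_int : IntegrableOn (fun x => u x ^ 2) (Ioo (-1:ℝ) 1)
  locAC : ∀ a b : ℝ, a ∈ Ioo (-1:ℝ) 1 → b ∈ Ioo (-1:ℝ) 1 →
      u b - u a = ∫ t in a..b, u' t
  deriv_intble : ∀ a b : ℝ, a ∈ Ioo (-1:ℝ) 1 → b ∈ Ioo (-1:ℝ) 1 →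
      IntervalIntegrable u' volume a b
  wsq_int : IntegrableOn (fun x => (1 - x ^ 2) * u' x ^ 2) (Ioo (-1:ℝ) 1)

open Topology

lemma one_sub_sq_pos {x : ℝ} (hx : x ∈ Ioo (-1 : ℝ) 1) : 0 < 1 - x ^ 2 := by
  nlinarith [hx.1, hx.2]

namespace Real

lemma artanh_eq_half_sub_log {x : ℝ} (hx : x ∈ Ioo (-1 : ℝ) 1) :
    artanh x = (log (1 + x) - log (1 - x)) / 2 := by
  rw [artanh_eq_half_log (Ioo_subset_Icc_self hx),
    log_div (by linarith [hx.1]) (by linarith [hx.2])]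
  ring

lemma hasDerivAt_artanh {x : ℝ} (hx : x ∈ Ioo (-1 : ℝ) 1) :
    HasDerivAt artanh (1 - x ^ 2)⁻¹ x := by
  have h₁ : 0 < 1 + x := by linarith [hx.1]
  have h₂ : 0 < 1 - x := by linarith [hx.2]
  have hlog : HasDerivAt (fun y => (log (1 + y) - log (1 - y)) / 2)
      ((1 / (1 + x) - (-1) / (1 - x)) / 2) x :=
    ((((hasDerivAt_id x).const_add 1).log h₁.ne').sub
      (((hasDerivAt_id x).const_sub 1).log h₂.ne')).div_const 2
  have hderiv : (1 / (1 + x) - (-1) / (1 - x)) / 2 = (1 - x ^ 2)⁻¹ := by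
    rw [show 1 - x ^ 2 = (1 + x) * (1 - x) by ring]
    field_simp
    ring
  rw [← hderiv]
  exact hlog.congr_of_eventuallyEq <| eventually_of_mem (isOpen_Ioo.mem_nhds hx)
    fun y hy => artanh_eq_half_sub_log hy

lemma intervalIntegrable_inv_one_sub_sq {a b : ℝ} (ha : a ∈ Ioo (-1 : ℝ) 1)
    (hb : b ∈ Ioo (-1 : ℝ) 1) : IntervalIntegrable (fun t => (1 - t ^ 2)⁻¹) volume a b :=
  ContinuousOn.intervalIntegrable <| ContinuousOn.inv₀ (by fun_prop) fun _ hx =>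
    (one_sub_sq_pos (ordConnected_Ioo.uIcc_subset ha hb hx)).ne'

lemma integral_inv_one_sub_sq {a b : ℝ} (ha : a ∈ Ioo (-1 : ℝ) 1) (hb : b ∈ Ioo (-1 : ℝ) 1) :
    ∫ t in a..b, (1 - t ^ 2)⁻¹ = artanh b - artanh a :=
  intervalIntegral.integral_eq_sub_of_hasDerivAt
    (fun _ hx => hasDerivAt_artanh (ordConnected_Ioo.uIcc_subset ha hb hx))
    (intervalIntegrable_inv_one_sub_sq ha hb)

lemma integrableOn_artanh : IntegrableOn artanh (Ioo (-1 : ℝ) 1) := by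
  have hlog₁ : IntegrableOn (fun x => log (1 + x)) (Ioo (-1 : ℝ) 1) := by
    have := (intervalIntegral.intervalIntegrable_log' (a := 0) (b := 2)).comp_add_left 1
    rw [intervalIntegrable_iff_integrableOn_Ioo_of_le (by norm_num)] at this
    norm_num at this
    exact this
  have hlog₂ : IntegrableOn (fun x => log (1 - x)) (Ioo (-1 : ℝ) 1) := by
    have := (intervalIntegral.intervalIntegrable_log' (a := 2) (b := 0)).comp_sub_left 1
    rw [intervalIntegrable_iff_integrableOn_Ioo_of_le (by norm_num)] at this
    norm_num at this
    exact this
  exact IntegrableOn.congr_fun ((hlog₁.sub hlog₂).div_const 2)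
    (fun x hx => (artanh_eq_half_sub_log hx).symm) measurableSet_Ioo

lemma abs_artanh_le_one {x : ℝ} (hx : |x| ≤ 1 / 2) : |artanh x| ≤ 1 := by
  obtain ⟨hx₁, hx₂⟩ := abs_le.1 hx
  have hq : 0 < (1 + x) / (1 - x) := div_pos (by linarith) (by linarith)
  have hlower := one_sub_inv_le_log_of_pos hq
  have hupper := log_le_sub_one_of_pos hq
  rw [inv_div] at hlower
  have h₁ : (1 - x) / (1 + x) ≤ 3 := by rw [div_le_iff₀ (by linarith)]; linarith
  have h₂ : (1 + x) / (1 - x) ≤ 3 := by rw [div_le_iff₀ (by linarith)]; linarith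
  rw [artanh_eq_half_log ⟨by linarith, by linarith⟩, abs_le]
  constructor <;> linarith

end Real

theorem sq_integral_mul_le {α : Type*} [MeasurableSpace α] {μ : Measure α} {f g : α → ℝ}
    (hf : MemLp f 2 μ) (hg : MemLp g 2 μ) :
    (∫ x, f x * g x ∂μ) ^ 2 ≤ (∫ x, f x ^ 2 ∂μ) * ∫ x, g x ^ 2 ∂μ := by
  have h2 : ENNReal.ofReal 2 = 2 := by norm_num
  have holder := integral_mul_norm_le_Lp_mul_Lq Real.HolderConjugate.two_two
    (h2 ▸ hf) (h2 ▸ hg)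
  simp only [Real.norm_eq_abs, Real.rpow_two, sq_abs, ← abs_mul, ← Real.sqrt_eq_rpow] at holder
  calc (∫ x, f x * g x ∂μ) ^ 2 = |∫ x, f x * g x ∂μ| ^ 2 := (sq_abs _).symm
    _ ≤ (√(∫ x, f x ^ 2 ∂μ) * √(∫ x, g x ^ 2 ∂μ)) ^ 2 :=
        pow_le_pow_left₀ (abs_nonneg _) (abs_integral_le_integral_abs.trans holder) 2
    _ = (∫ x, f x ^ 2 ∂μ) * ∫ x, g x ^ 2 ∂μ := by
        rw [mul_pow, Real.sq_sqrt (integral_nonneg fun x => sq_nonneg _),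
          Real.sq_sqrt (integral_nonneg fun x => sq_nonneg _)]

theorem sq_integral_le_integral_mul_sq_mul_integral_inv {α : Type*} [MeasurableSpace α]
    {μ : Measure α} {f w : α → ℝ} (hf : AEStronglyMeasurable f μ)
    (hw : AEStronglyMeasurable w μ) (hw_pos : ∀ᵐ x ∂μ, 0 < w x)
    (hwf : Integrable (fun x => w x * f x ^ 2) μ) (hw_inv : Integrable (fun x => (w x)⁻¹) μ) :
    (∫ x, f x ∂μ) ^ 2 ≤ (∫ x, w x * f x ^ 2 ∂μ) * ∫ x, (w x)⁻¹ ∂μ := by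
  have hsqrt : AEStronglyMeasurable (fun x => √(w x)) μ :=
    hw.aemeasurable.sqrt.aestronglyMeasurable
  have hF : (fun x => (√(w x) * f x) ^ 2) =ᵐ[μ] fun x => w x * f x ^ 2 := by
    filter_upwards [hw_pos] with x hx
    rw [mul_pow, Real.sq_sqrt hx.le]
  have hG : (fun x => ((√(w x))⁻¹) ^ 2) =ᵐ[μ] fun x => (w x)⁻¹ := by
    filter_upwards [hw_pos] with x hx
    rw [inv_pow, Real.sq_sqrt hx.le]
  have hFG : (fun x => √(w x) * f x * (√(w x))⁻¹) =ᵐ[μ] f := by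
    filter_upwards [hw_pos] with x hx
    have := Real.sqrt_pos.2 hx
    field_simp
  have hcs := sq_integral_mul_le (μ := μ) (f := fun x => √(w x) * f x)
    (g := fun x => (√(w x))⁻¹)
    ((memLp_two_iff_integrable_sq (hsqrt.mul hf)).2 (hwf.congr hF.symm))
    ((memLp_two_iff_integrable_sq hsqrt.aemeasurable.inv.aestronglyMeasurable).2
      (hw_inv.congr hG.symm))
  rwa [integral_congr_ae hF, integral_congr_ae hG, integral_congr_ae hFG] at hcs

theorem equicontinuousAt_of_sq_dist_le {ι X : Type*} [TopologicalSpace X] {F : ι → X → ℝ}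
    {g : X → ℝ} {x₀ : X} (C : ℝ) (hg : ContinuousAt g x₀)
    (hF : ∀ i x, (F i x - F i x₀) ^ 2 ≤ C * |g x - g x₀|) : EquicontinuousAt F x₀ := by
  have hlim : Tendsto (fun x => √(C * |g x - g x₀|)) (𝓝 x₀) (𝓝 0) := by
    simpa using ((hg.tendsto.sub_const (g x₀)).abs.const_mul C).sqrt
  refine Metric.equicontinuousAt_of_continuity_modulus _ hlim F
    (Eventually.of_forall fun x i => ?_)
  rw [dist_comm, Real.dist_eq]
  exact Real.abs_le_sqrt (hF i x)

theorem exists_subseq_tendsto_of_equicontinuous {X : Type*} [TopologicalSpace X]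
    [TopologicalSpace.SeparableSpace X] {F : ℕ → X → ℝ} (hF : Equicontinuous F)
    (hbdd : ∀ x, ∃ C, ∀ n, |F n x| ≤ C) :
    ∃ φ : ℕ → ℕ, StrictMono φ ∧ ∀ x, ∃ l, Tendsto (fun k => F (φ k) x) atTop (𝓝 l) := by
  obtain ⟨s, hs_count, hs_dense⟩ := TopologicalSpace.exists_countable_dense X
  have : Countable s := hs_count.to_subtype
  choose C hC using hbdd
  obtain ⟨a, -, φ, hφ, hconv⟩ :=
    (isCompact_univ_pi fun y : s => isCompact_Icc (a := -C y) (b := C y)).tendsto_subseq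
      (x := fun n (y : s) => F n y) fun n y _ => abs_le.1 (hC y n)
  refine ⟨φ, hφ, fun x => cauchySeq_tendsto_of_complete ?_⟩
  rw [Metric.cauchySeq_iff']
  intro ε hε
  obtain ⟨y, hys, hy⟩ := ((mem_closure_iff_frequently.1 (hs_dense x)).and_eventually
    (Metric.equicontinuousAt_iff_right.1 (hF x) (ε / 3) (by positivity))).exists
  obtain ⟨N, hN⟩ := Metric.cauchySeq_iff'.1
    (tendsto_pi_nhds.1 hconv ⟨y, hys⟩).cauchySeq (ε / 3) (by positivity)
  refine ⟨N, fun n hn => ?_⟩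
  calc dist (F (φ n) x) (F (φ N) x)
      ≤ dist (F (φ n) x) (F (φ n) y) + dist (F (φ n) y) (F (φ N) y)
        + dist (F (φ N) y) (F (φ N) x) := dist_triangle4 _ _ _ _
    _ < ε / 3 + ε / 3 + ε / 3 := by
        gcongr
        · exact hy (φ n)
        · exact hN n hn
        · rw [dist_comm]; exact hy (φ N)
    _ = ε := by ring

theorem tendsto_integral_sq_sub_of_dominated {α : Type*} [MeasurableSpace α] {μ : Measure α}
    {F : ℕ → α → ℝ} {f H : α → ℝ} (hF : ∀ n, AEStronglyMeasurable (F n) μ)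
    (hH : Integrable H μ) (hbound : ∀ n, ∀ᵐ x ∂μ, F n x ^ 2 ≤ H x)
    (hlim : ∀ᵐ x ∂μ, Tendsto (fun n => F n x) atTop (𝓝 (f x))) :
    AEStronglyMeasurable f μ ∧ Integrable (fun x => f x ^ 2) μ ∧
      Tendsto (fun n => ∫ x, (F n x - f x) ^ 2 ∂μ) atTop (𝓝 0) := by
  have hf : AEStronglyMeasurable f μ := aestronglyMeasurable_of_tendsto_ae atTop hF hlim
  have hfH : ∀ᵐ x ∂μ, f x ^ 2 ≤ H x := by
    filter_upwards [hlim, ae_all_iff.2 hbound] with x hx hxH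
    exact le_of_tendsto' (hx.pow 2) hxH
  refine ⟨hf, hH.mono' (hf.pow 2) ?_, ?_⟩
  · filter_upwards [hfH] with x hx
    rwa [Real.norm_of_nonneg (sq_nonneg _)]
  · have hdct := tendsto_integral_of_dominated_convergence (fun x => 4 * H x)
      (fun n => ((hF n).sub hf).pow 2) (hH.const_mul 4)
      (fun n => by
        filter_upwards [hbound n, hfH] with x hFx hfx
        change ‖(F n x - f x) ^ 2‖ ≤ 4 * H x
        rw [Real.norm_of_nonneg (sq_nonneg _)]
        nlinarith [sq_nonneg (F n x + f x)])
      (by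
        filter_upwards [hlim] with x hx
        simpa using (hx.sub_const (f x)).pow 2)
    simpa using hdct

section

open Real

theorem MemV.sq_sub_le {u u' : ℝ → ℝ} (hu : MemV u u') {a b : ℝ} (ha : a ∈ Ioo (-1 : ℝ) 1)
    (hb : b ∈ Ioo (-1 : ℝ) 1) :
    (u b - u a) ^ 2 ≤ (∫ x in Ioo (-1 : ℝ) 1, (1 - x ^ 2) * u' x ^ 2) * |artanh b - artanh a| := by
  wlog hab : a ≤ b generalizing a b
  · rw [← neg_sub, neg_sq, abs_sub_comm]
    exact this hb ha (le_of_not_ge hab)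
  have hsub : Ioc a b ⊆ Ioo (-1 : ℝ) 1 := fun t ht => ⟨ha.1.trans ht.1, ht.2.trans_lt hb.2⟩
  have hw_pos : ∀ᵐ t ∂volume.restrict (Ioc a b), 0 < 1 - t ^ 2 :=
    ae_restrict_of_forall_mem measurableSet_Ioc fun t ht => one_sub_sq_pos (hsub ht)
  have hu' := (intervalIntegrable_iff_integrableOn_Ioc_of_le hab).1 (hu.deriv_intble a b ha hb)
  have hinv := (intervalIntegrable_iff_integrableOn_Ioc_of_le hab).1
    (intervalIntegrable_inv_one_sub_sq ha hb)
  have hcs := sq_integral_le_integral_mul_sq_mul_integral_inv hu'.aestronglyMeasurable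
    (by fun_prop) hw_pos (hu.wsq_int.mono_set hsub) hinv
  have henergy : ∫ t in Ioc a b, (1 - t ^ 2) * u' t ^ 2 ≤
      ∫ t in Ioo (-1 : ℝ) 1, (1 - t ^ 2) * u' t ^ 2 :=
    setIntegral_mono_set hu.wsq_int
      (ae_restrict_of_forall_mem measurableSet_Ioo fun t ht =>
        mul_nonneg (one_sub_sq_pos ht).le (sq_nonneg _))
      hsub.eventuallyLE
  have hartanh : ∫ t in Ioc a b, (1 - t ^ 2)⁻¹ = |artanh b - artanh a| := by
    rw [← intervalIntegral.integral_of_le hab, integral_inv_one_sub_sq ha hb,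
      abs_of_nonneg (sub_nonneg.2 (artanh_le_artanh ha.1 hb.2 hab))]
  rw [hu.locAC a b ha hb, intervalIntegral.integral_of_le hab, ← hartanh]
  exact hcs.trans (mul_le_mul_of_nonneg_right henergy (hartanh ▸ abs_nonneg _))

theorem MemV.sq_le {u u' : ℝ → ℝ} (hu : MemV u u') {B : ℝ}
    (hL2 : ∫ x in Ioo (-1 : ℝ) 1, u x ^ 2 ≤ B)
    (hW : ∫ x in Ioo (-1 : ℝ) 1, (1 - x ^ 2) * u' x ^ 2 ≤ B) {x : ℝ} (hx : x ∈ Ioo (-1 : ℝ) 1) :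
    u x ^ 2 ≤ 2 * B * (2 + |artanh x|) := by
  have hsub : Ioo (-(1 / 2) : ℝ) (1 / 2) ⊆ Ioo (-1 : ℝ) 1 :=
    Ioo_subset_Ioo (by norm_num) (by norm_num)
  obtain ⟨z, hz, hz_avg⟩ := exists_le_setAverage (by simp) measure_Ioo_lt_top.ne
    (hu.sq_int.mono_set hsub)
  have hz_sq : u z ^ 2 ≤ B := by
    rw [setAverage_eq, Real.volume_real_Ioo_of_le (by norm_num),
      show (1 / 2 : ℝ) - -(1 / 2) = 1 by norm_num, inv_one, one_smul] at hz_avg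
    refine hz_avg.trans (le_trans ?_ hL2)
    exact setIntegral_mono_set hu.sq_int
      (ae_restrict_of_forall_mem measurableSet_Ioo fun t _ => sq_nonneg _) hsub.eventuallyLE
  have hB : 0 ≤ B := (sq_nonneg _).trans hz_sq
  have hz_artanh : |artanh z| ≤ 1 := abs_artanh_le_one (abs_le.2 ⟨hz.1.le, hz.2.le⟩)
  have hdiff : (u x - u z) ^ 2 ≤ B * (|artanh x| + 1) :=
    calc (u x - u z) ^ 2
        ≤ (∫ t in Ioo (-1 : ℝ) 1, (1 - t ^ 2) * u' t ^ 2) * |artanh x - artanh z| :=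
          hu.sq_sub_le (hsub hz) hx
      _ ≤ B * (|artanh x| + 1) := mul_le_mul hW
          ((abs_sub _ _).trans (by linarith)) (abs_nonneg _) hB
  nlinarith [sq_nonneg (u x - 2 * u z)]

end

/-- Compact embedding of `V` into `L²(-1,1)`: every `V`-bounded sequence has a subsequence
converging in `L²(-1,1)`. -/
theorem V_compactly_embeds_L2 (u : ℕ → ℝ → ℝ) (u' : ℕ → ℝ → ℝ)
    (hmem : ∀ n, MemV (u n) (u' n))
    (hbdd : ∃ B : ℝ, ∀ n,
      (∫ x in Ioo (-1:ℝ) 1, u n x ^ 2)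
        + (∫ x in Ioo (-1:ℝ) 1, (1 - x ^ 2) * u' n x ^ 2) ≤ B) :
    ∃ φ : ℕ → ℕ, StrictMono φ ∧ ∃ v : ℝ → ℝ,
      AEStronglyMeasurable v (volume.restrict (Ioo (-1:ℝ) 1)) ∧
      IntegrableOn (fun x => v x ^ 2) (Ioo (-1:ℝ) 1) ∧
      Tendsto (fun k => ∫ x in Ioo (-1:ℝ) 1, (u (φ k) x - v x) ^ 2)
        atTop (nhds 0) := by
  obtain ⟨B, hB⟩ := hbdd
  have hL2 : ∀ n, ∫ x in Ioo (-1:ℝ) 1, u n x ^ 2 ≤ B := fun n =>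
    (le_add_of_nonneg_right (setIntegral_nonneg measurableSet_Ioo fun x hx =>
      mul_nonneg (one_sub_sq_pos hx).le (sq_nonneg _))).trans (hB n)
  have hW : ∀ n, ∫ x in Ioo (-1:ℝ) 1, (1 - x ^ 2) * u' n x ^ 2 ≤ B := fun n =>
    (le_add_of_nonneg_left (setIntegral_nonneg measurableSet_Ioo fun x _ =>
      sq_nonneg _)).trans (hB n)
  have hequi : Equicontinuous fun n (x : Ioo (-1:ℝ) 1) => u n x := fun x₀ =>
    equicontinuousAt_of_sq_dist_le (g := fun x : Ioo (-1:ℝ) 1 => Real.artanh x) B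
      ((Real.hasDerivAt_artanh x₀.2).continuousAt.comp continuous_subtype_val.continuousAt)
      fun n x => ((hmem n).sq_sub_le x₀.2 x.2).trans
        (mul_le_mul_of_nonneg_right (hW n) (abs_nonneg _))
  have hbound : ∀ n, ∀ x ∈ Ioo (-1:ℝ) 1, u n x ^ 2 ≤ 2 * B * (2 + |Real.artanh x|) :=
    fun n x hx => (hmem n).sq_le (hL2 n) (hW n) hx
  obtain ⟨φ, hφ, hlim⟩ := exists_subseq_tendsto_of_equicontinuous hequi fun x =>
    ⟨_, fun n => Real.abs_le_sqrt (hbound n x x.2)⟩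
  obtain ⟨hv_meas, hv_sq, hv_lim⟩ := tendsto_integral_sq_sub_of_dominated
    (μ := volume.restrict (Ioo (-1:ℝ) 1)) (F := fun k => u (φ k))
    (f := fun x => limUnder atTop fun k => u (φ k) x)
    (fun k => (continuousOn_iff_continuous_domRestrict.2
      (hequi.continuous (φ k))).aestronglyMeasurable measurableSet_Ioo)
    (((integrableOn_const measure_Ioo_lt_top.ne).add Real.integrableOn_artanh.abs).const_mul _)
    (fun k => ae_restrict_of_forall_mem measurableSet_Ioo (hbound (φ k)))
    (ae_restrict_of_forall_mem measurableSet_Ioo fun x hx =>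
      tendsto_nhds_limUnder (hlim ⟨x, hx⟩))
  exact ⟨φ, hφ, _, hv_meas, hv_sq, hv_lim⟩
end
end
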